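/- arXiv:1910.04914 — 2 statements merged into one kernel-verified Lean document; each statement's English description precedes it below -/
import Mathlib

section
/- Let $\{(\Omega_i,\Sigma_i,\mu_i)\}_{i\in\mathbb{N}}$ be a sequence of measure spaces, $\mathscr{C}$ a finite rectangle and $\{\mathscr{C}_n\}_{n\in\mathbb{N}}$ pairwise disjoint finite rectangles with $\biguplus_{n\in\mathbb{N}} \mathscr{C}_n \subset \mathscr{C}$. Then $\sum_{n\in\mathbb{N}} \mathrm{vol}(\mathscr{C}_n) \le \mathrm{vol}(\mathscr{C})$. -/
open MeasureTheory Filter Set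
open scoped ENNReal

/-- `HasVol μ C v` says that the rectangle `∏ᵢ Cᵢ` is a *finite rectangle*:
all sides are measurable with finite measure and the infinite product
`∏ᵢ μᵢ(Cᵢ)` converges to the finite value `v ∈ [0,∞)` (its volume). -/
def HasVol {Ω : ℕ → Type*} [∀ i, MeasurableSpace (Ω i)]
    (μ : ∀ i, Measure (Ω i)) (C : ∀ i, Set (Ω i)) (v : ℝ) : Prop :=
  (∀ i, MeasurableSet (C i)) ∧ (∀ i, μ i (C i) ≠ ∞) ∧
    Tendsto (fun m => ∏ i ∈ Finset.range m, (μ i (C i)).toReal) atTop (nhds v)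

/-! Truncated to the first `m` coordinates, each `Dₙ` is a measurable box for the finite product
measure `∏_{i<m} μᵢ|_{Cᵢ}` (restricting to `Cᵢ` makes the factors finite), of mass
`∏_{i<m} μᵢ(Dₙᵢ ∩ Cᵢ)`, while the total mass is `∏_{i<m} μᵢ(Cᵢ)`. Two disjoint rectangles have
disjoint sides in some coordinate, so finitely many of them stay disjoint after truncation once `m`
is large, and additivity bounds the sum of their truncated masses by `∏_{i<m} μᵢ(Cᵢ)`. Letting
`m → ∞` bounds every partial sum of the series. Intersecting with `C` does not change the limits:
a rectangle inside `C` either has its sides inside those of `C` or has an empty side, and then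
both products eventually vanish. -/

namespace HasVol

variable {Ω : ℕ → Type*} [∀ i, MeasurableSpace (Ω i)] {μ : ∀ i, Measure (Ω i)}
  {C : ∀ i, Set (Ω i)} {v : ℝ}

theorem tendsto_prod_measure (h : HasVol μ C v) :
    Tendsto (fun m => ∏ i ∈ Finset.range m, μ i (C i)) atTop (nhds (ENNReal.ofReal v)) := by
  refine (ENNReal.tendsto_ofReal h.2.2).congr fun m => ?_
  rw [ENNReal.ofReal_prod_of_nonneg fun i _ => ENNReal.toReal_nonneg]
  exact Finset.prod_congr rfl fun i _ => ENNReal.ofReal_toReal (h.2.1 i)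

end HasVol

theorem prod_range_measure_inter_eventuallyEq {Ω : ℕ → Type*} [∀ i, MeasurableSpace (Ω i)]
    (μ : ∀ i, Measure (Ω i)) {C D : ∀ i, Set (Ω i)} (h : univ.pi D ⊆ univ.pi C) :
    (fun m => ∏ i ∈ Finset.range m, μ i (D i ∩ C i)) =ᶠ[atTop]
      fun m => ∏ i ∈ Finset.range m, μ i (D i) := by
  rcases univ_pi_subset_univ_pi_iff.1 h with hDC | ⟨k, hk⟩
  · exact .of_forall fun m => by simp only [inter_eq_left.2 (hDC _)]
  · filter_upwards [eventually_gt_atTop k] with m hm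
    rw [Finset.prod_eq_zero (Finset.mem_range.2 hm) (by simp [hk]),
      Finset.prod_eq_zero (Finset.mem_range.2 hm) (by simp [hk])]

theorem sum_prod_measure_inter_le {ι κ : Type*} [Fintype ι] {Ω : ι → Type*}
    [∀ i, MeasurableSpace (Ω i)] (μ : ∀ i, Measure (Ω i)) {C : ∀ i, Set (Ω i)}
    (hC : ∀ i, μ i (C i) ≠ ∞) {s : Finset κ} {D : κ → ∀ i, Set (Ω i)}
    (hD : ∀ n ∈ s, ∀ i, MeasurableSet (D n i))
    (hdisj : (s : Set κ).PairwiseDisjoint fun n => univ.pi (D n)) :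
    ∑ n ∈ s, ∏ i, μ i (D n i ∩ C i) ≤ ∏ i, μ i (C i) := by
  have : ∀ i, IsFiniteMeasure ((μ i).restrict (C i)) := fun i => ⟨by simpa using (hC i).lt_top⟩
  let ρ := Measure.pi fun i => (μ i).restrict (C i)
  calc ∑ n ∈ s, ∏ i, μ i (D n i ∩ C i)
      = ∑ n ∈ s, ρ (univ.pi (D n)) := by
        refine Finset.sum_congr rfl fun n hn => ?_
        simp only [ρ, Measure.pi_pi, Measure.restrict_apply (hD n hn _)]
    _ = ρ (⋃ n ∈ s, univ.pi (D n)) :=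
        (measure_biUnion_finset hdisj fun n hn => .univ_pi (hD n hn)).symm
    _ ≤ ρ univ := measure_mono (subset_univ _)
    _ = ∏ i, μ i (C i) := by simp only [ρ, Measure.pi_univ, Measure.restrict_apply_univ]

theorem sum_prod_range_measure_inter_le {κ : Type*} {Ω : ℕ → Type*} [∀ i, MeasurableSpace (Ω i)]
    (μ : ∀ i, Measure (Ω i)) {C : ∀ i, Set (Ω i)} (hC : ∀ i, μ i (C i) ≠ ∞) {s : Finset κ}
    {D : κ → ∀ i, Set (Ω i)} (hD : ∀ n ∈ s, ∀ i, MeasurableSet (D n i)) {m : ℕ}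
    (hsep : ∀ n ∈ s, ∀ n' ∈ s, n ≠ n' → ∃ k < m, Disjoint (D n k) (D n' k)) :
    ∑ n ∈ s, ∏ i ∈ Finset.range m, μ i (D n i ∩ C i) ≤ ∏ i ∈ Finset.range m, μ i (C i) := by
  have hdisj : (s : Set κ).PairwiseDisjoint fun n => univ.pi fun i : Fin m => D n i := by
    intro n hn n' hn' hne
    obtain ⟨k, hkm, hk⟩ := hsep n hn n' hn' hne
    exact disjoint_univ_pi.2 ⟨⟨k, hkm⟩, hk⟩
  simp only [← Fin.prod_univ_eq_prod_range]
  exact sum_prod_measure_inter_le (fun i : Fin m => μ i) (fun i => hC i)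
      (fun n hn i => hD n hn i) hdisj

theorem stmt_8 {Ω : ℕ → Type*} [∀ i, MeasurableSpace (Ω i)] (μ : ∀ i, Measure (Ω i))
    (C : ∀ i, Set (Ω i)) (v : ℝ) (hC : HasVol μ C v)
    (D : ℕ → ∀ i, Set (Ω i)) (w : ℕ → ℝ) (hD : ∀ n, HasVol μ (D n) (w n))
    (hdisj : Pairwise (Function.onFun Disjoint (fun n => Set.univ.pi (D n))))
    (hsub : (⋃ n, Set.univ.pi (D n)) ⊆ Set.univ.pi C) :
    ∑' n, ENNReal.ofReal (w n) ≤ ENNReal.ofReal v := by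
  refine ENNReal.tsum_le_of_sum_range_le fun N => ?_
  have hsep : ∀ᶠ m in atTop, ∀ n ∈ Finset.range N, ∀ n' ∈ Finset.range N,
      n ≠ n' → ∃ k < m, Disjoint (D n k) (D n' k) := by
    refine (eventually_all_finset _).2 fun n _ => (eventually_all_finset _).2 fun n' _ => ?_
    rcases eq_or_ne n n' with rfl | hne
    · exact .of_forall fun _ h => (h rfl).elim
    obtain ⟨k, hk⟩ := disjoint_univ_pi.1 (hdisj hne)
    filter_upwards [eventually_gt_atTop k] with m hm _ using ⟨k, hm, hk⟩
  have hlim : Tendsto (fun m => ∑ n ∈ Finset.range N, ∏ i ∈ Finset.range m, μ i (D n i ∩ C i))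
      atTop (nhds (∑ n ∈ Finset.range N, ENNReal.ofReal (w n))) :=
    tendsto_finsetSum _ fun n _ => (hD n).tendsto_prod_measure.congr'
      (prod_range_measure_inter_eventuallyEq μ ((subset_iUnion _ n).trans hsub)).symm
  refine le_of_tendsto_of_tendsto hlim hC.tendsto_prod_measure ?_
  filter_upwards [hsep] with m hm
  exact sum_prod_range_measure_inter_le μ hC.2.1 (fun n _ => (hD n).1) hm
end

section
/- Define the outer measure $\mu^*$ on subsets of $\prod_{i\in\mathbb{N}}\Omega_i$ by $\mu^*(A) = \inf\{\sum_{n} \mathrm{vol}(\mathscr{C}_n) : \{\mathscr{C}_n\}$ finite rectangles covering $A\}$ (with $\mu^*(A)=\infty$ if no cover exists). Then every cylinder rectangle $\mathscr{C} = \prod_{i=1}^m \mathscr{C}_i \times \prod_{i=m+1}^\infty \Omega_i$ with $\mathscr{C}_i \in \Sigma_i$ is Carathéodory $\mu^*$-measurable, i.e., $\mu^*(B) \ge \mu^*(B \cap \mathscr{C}) + \mu^*(B \cap \mathscr{C}^c)$ for every subset $B$. -/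
open MeasureTheory Filter Set
open scoped ENNReal

/-- The outer measure generated by covers by finite rectangles weighted by their volume;
it takes the value `∞` when no countable cover by finite rectangles exists. -/
noncomputable def outerVol {Ω : ℕ → Type*} [∀ i, MeasurableSpace (Ω i)]
    (μ : ∀ i, Measure (Ω i)) (A : Set (∀ i, Ω i)) : ℝ≥0∞ :=
  ⨅ (D : ℕ → ∀ i, Set (Ω i)) (w : ℕ → ℝ) (_ : ∀ n, HasVol μ (D n) (w n))
    (_ : A ⊆ ⋃ n, Set.univ.pi (D n)), ∑' n, ENNReal.ofReal (w n)

/-!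
Fix a cover of `B` by finite rectangles `Dₙ`. The complement of the cylinder rectangle
`C = ∏ᵢ Cᵢ` is the disjoint union of the rectangles `Pⱼ = C₀ × ⋯ × Cⱼ₋₁ × Cⱼᶜ × Ωⱼ₊₁ × ⋯`,
`j < m`, so the sets `Dₙ ∩ C` cover `B ∩ C` and the sets `Dₙ ∩ Pⱼ` cover `B ∩ Cᶜ`.
All of these are finite rectangles that differ from `Dₙ` only in the first `m`
coordinates, so their volumes share the tail factor of `Dₙ`, and by finite additivity
of `μ₀, …, μₘ₋₁` they add up to the volume of `Dₙ`.
-/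

/-- The junk value `x / 0 = 0` makes the formula right also when `∏_{i<m} f i = 0`. -/
theorem tendsto_prod_range_of_eq_of_le {K : Type*} [Field K] [TopologicalSpace K]
    [ContinuousMul K] {f g : ℕ → K} {m : ℕ} {v : K} (hfg : ∀ i, m ≤ i → g i = f i)
    (hzero : ∏ i ∈ Finset.range m, f i = 0 → ∏ i ∈ Finset.range m, g i = 0)
    (hf : Tendsto (fun M => ∏ i ∈ Finset.range M, f i) atTop (nhds v)) :
    Tendsto (fun M => ∏ i ∈ Finset.range M, g i) atTop
      (nhds ((∏ i ∈ Finset.range m, g i) * (v / ∏ i ∈ Finset.range m, f i))) := by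
  refine ((hf.div_const _).const_mul _).congr' ?_
  filter_upwards [eventually_ge_atTop m] with M hM
  rw [← Finset.prod_range_mul_prod_Ico g hM, ← Finset.prod_range_mul_prod_Ico f hM,
    Finset.prod_congr rfl fun i hi => hfg i (Finset.mem_Ico.mp hi).1]
  by_cases hc : ∏ i ∈ Finset.range m, f i = 0
  · simp [hzero hc]
  · rw [mul_div_cancel_left₀ _ hc]

section Rectangles

variable {Ω : ℕ → Type*}

/-- `univ.pi (complPiece C j)` consists of the points whose first coordinate outside `C`
is the `j`-th. -/
def complPiece (C : ∀ i, Set (Ω i)) (j i : ℕ) : Set (Ω i) :=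
  if i < j then C i else if i = j then (C i)ᶜ else univ

theorem complPiece_of_lt {C : ∀ i, Set (Ω i)} {i j : ℕ} (h : j < i) :
    complPiece C j i = univ := by
  rw [complPiece, if_neg (by omega), if_neg (by omega)]

theorem complPiece_self (C : ∀ i, Set (Ω i)) (j : ℕ) : complPiece C j j = (C j)ᶜ := by
  rw [complPiece, if_neg (lt_irrefl j), if_pos rfl]

theorem compl_pi_subset_iUnion_pi_complPiece (C : ∀ i, Set (Ω i)) :
    (univ.pi C)ᶜ ⊆ ⋃ j, univ.pi (complPiece C j) := by
  classical
  intro x hx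
  have hex : ∃ i, x i ∉ C i := by simpa [mem_univ_pi] using hx
  refine mem_iUnion.mpr ⟨Nat.find hex, mem_univ_pi.mpr fun i => ?_⟩
  rcases lt_trichotomy i (Nat.find hex) with hlt | rfl | hgt
  · rw [complPiece, if_pos hlt]
    exact not_not.mp (Nat.find_min hex hlt)
  · rw [complPiece_self]
    exact Nat.find_spec hex
  · rw [complPiece_of_lt hgt]
    exact mem_univ _

variable [∀ i, MeasurableSpace (Ω i)] {μ : ∀ i, Measure (Ω i)}

theorem measurableSet_complPiece {C : ∀ i, Set (Ω i)} (hC : ∀ i, MeasurableSet (C i))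
    (j i : ℕ) : MeasurableSet (complPiece C j i) := by
  unfold complPiece
  split_ifs
  exacts [hC i, (hC i).compl, MeasurableSet.univ]

theorem prod_inter_add_sum_prod_inter_complPiece {A C : ∀ i, Set (Ω i)}
    (hA : ∀ i, μ i (A i) ≠ ∞) (hC : ∀ i, MeasurableSet (C i)) (m : ℕ) :
    ∏ i ∈ Finset.range m, (μ i (A i ∩ C i)).toReal
      + ∑ j ∈ Finset.range m, ∏ i ∈ Finset.range m, (μ i (A i ∩ complPiece C j i)).toReal
      = ∏ i ∈ Finset.range m, (μ i (A i)).toReal := by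
  induction m with
  | zero => simp
  | succ m ih =>
    have hold : ∀ j ∈ Finset.range m,
        ∏ i ∈ Finset.range (m + 1), (μ i (A i ∩ complPiece C j i)).toReal
          = (∏ i ∈ Finset.range m, (μ i (A i ∩ complPiece C j i)).toReal)
            * (μ m (A m)).toReal := fun j hj => by
      rw [Finset.prod_range_succ, complPiece_of_lt (Finset.mem_range.mp hj), inter_univ]
    have hnew : ∏ i ∈ Finset.range (m + 1), (μ i (A i ∩ complPiece C m i)).toReal
        = (∏ i ∈ Finset.range m, (μ i (A i ∩ C i)).toReal)
          * (μ m (A m ∩ (C m)ᶜ)).toReal := by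
      rw [Finset.prod_range_succ, complPiece_self]
      congr 1
      exact Finset.prod_congr rfl fun i hi => by rw [complPiece, if_pos (Finset.mem_range.mp hi)]
    have hsplit : (μ m (A m ∩ C m)).toReal + (μ m (A m ∩ (C m)ᶜ)).toReal
        = (μ m (A m)).toReal := by
      rw [← ENNReal.toReal_add (measure_ne_top_of_subset inter_subset_left (hA m))
        (measure_ne_top_of_subset inter_subset_left (hA m)), ← sdiff_eq,
        measure_inter_add_sdiff _ (hC m)]
    rw [Finset.prod_range_succ, Finset.prod_range_succ, Finset.sum_range_succ,
      Finset.sum_congr rfl hold, ← Finset.sum_mul, hnew]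
    linear_combination (μ m (A m)).toReal * ih
      + (∏ i ∈ Finset.range m, (μ i (A i ∩ C i)).toReal) * hsplit

namespace HasVol

variable {A : ∀ i, Set (Ω i)} {v : ℝ}

theorem nonneg (h : HasVol μ A v) : 0 ≤ v :=
  ge_of_tendsto' h.2.2 fun _ => Finset.prod_nonneg fun _ _ => ENNReal.toReal_nonneg

theorem eq_prod_mul_div (h : HasVol μ A v) (m : ℕ) :
    v = (∏ i ∈ Finset.range m, (μ i (A i)).toReal)
      * (v / ∏ i ∈ Finset.range m, (μ i (A i)).toReal) :=
  tendsto_nhds_unique h.2.2 (tendsto_prod_range_of_eq_of_le (fun _ _ => rfl) id h.2.2)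

theorem inter_cylinder (h : HasVol μ A v) {E : ∀ i, Set (Ω i)}
    (hE : ∀ i, MeasurableSet (E i)) {m : ℕ} (hEm : ∀ i, m ≤ i → E i = univ) :
    HasVol μ (fun i => A i ∩ E i) ((∏ i ∈ Finset.range m, (μ i (A i ∩ E i)).toReal)
      * (v / ∏ i ∈ Finset.range m, (μ i (A i)).toReal)) := by
  obtain ⟨hAm, hAfin, hlim⟩ := h
  have hle : ∀ i, (μ i (A i ∩ E i)).toReal ≤ (μ i (A i)).toReal := fun i =>
    ENNReal.toReal_mono (hAfin i) (measure_mono inter_subset_left)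
  refine ⟨fun i => (hAm i).inter (hE i),
    fun i => measure_ne_top_of_subset inter_subset_left (hAfin i),
    tendsto_prod_range_of_eq_of_le (g := fun i => (μ i (A i ∩ E i)).toReal)
      (fun i hi => by rw [hEm i hi, inter_univ]) (fun h0 => ?_) hlim⟩
  refine le_antisymm ?_ (Finset.prod_nonneg fun _ _ => ENNReal.toReal_nonneg)
  exact h0 ▸ Finset.prod_le_prod (fun _ _ => ENNReal.toReal_nonneg) fun i _ => hle i

theorem exists_split (h : HasVol μ A v) {C : ∀ i, Set (Ω i)}
    (hC : ∀ i, MeasurableSet (C i)) {m : ℕ} (hCm : ∀ i, m ≤ i → C i = univ) :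
    ∃ (u : ℝ) (u' : ℕ → ℝ), HasVol μ (fun i => A i ∩ C i) u ∧
      (∀ j, HasVol μ (fun i => A i ∩ complPiece C j i) (u' j)) ∧
      ENNReal.ofReal u + ∑' j, ENNReal.ofReal (u' j) = ENNReal.ofReal v := by
  set τ := v / ∏ i ∈ Finset.range m, (μ i (A i)).toReal
  set u' : ℕ → ℝ := fun j =>
    if j < m then (∏ i ∈ Finset.range m, (μ i (A i ∩ complPiece C j i)).toReal) * τ else 0
  have hu' : ∀ j, HasVol μ (fun i => A i ∩ complPiece C j i) (u' j) := by
    intro j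
    by_cases hj : j < m
    · simpa only [u', if_pos hj] using
        h.inter_cylinder (measurableSet_complPiece hC j) fun i hi => complPiece_of_lt (by omega)
    -- for `j ≥ m` the piece is empty, since `Cⱼ = univ`
    · convert h.inter_cylinder (measurableSet_complPiece hC j) (m := j + 1)
        (fun i hi => complPiece_of_lt (by omega)) using 1
      rw [Finset.prod_eq_zero (Finset.self_mem_range_succ j)
        (by rw [complPiece_self, hCm j (by omega), compl_univ, inter_empty, measure_empty,
          ENNReal.toReal_zero]), zero_mul]
      exact if_neg hj
  refine ⟨_, u', h.inter_cylinder hC hCm, hu', ?_⟩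
  have hsum : ∑' j, ENNReal.ofReal (u' j) = ∑ j ∈ Finset.range m, ENNReal.ofReal (u' j) :=
    tsum_eq_sum fun j hj => by simp [u', Finset.mem_range.not.mp hj]
  rw [hsum, ← ENNReal.ofReal_sum_of_nonneg fun j _ => (hu' j).nonneg,
    ← ENNReal.ofReal_add (h.inter_cylinder hC hCm).nonneg
      (Finset.sum_nonneg fun j _ => (hu' j).nonneg),
    Finset.sum_congr rfl fun j hj => if_pos (Finset.mem_range.mp hj), ← Finset.sum_mul,
    ← add_mul, prod_inter_add_sum_prod_inter_complPiece h.2.1 hC, ← h.eq_prod_mul_div]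

end HasVol

theorem outerVol_le {A : Set (∀ i, Ω i)} {D : ℕ → ∀ i, Set (Ω i)} {w : ℕ → ℝ}
    (hD : ∀ n, HasVol μ (D n) (w n)) (hA : A ⊆ ⋃ n, univ.pi (D n)) :
    outerVol μ A ≤ ∑' n, ENNReal.ofReal (w n) :=
  iInf_le_of_le D <| iInf_le_of_le w <| iInf_le_of_le hD <| iInf_le_of_le hA le_rfl

theorem outerVol_le_tsum_tsum {A : Set (∀ i, Ω i)} {D : ℕ → ℕ → ∀ i, Set (Ω i)}
    {w : ℕ → ℕ → ℝ} (hD : ∀ n j, HasVol μ (D n j) (w n j))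
    (hA : A ⊆ ⋃ n, ⋃ j, univ.pi (D n j)) :
    outerVol μ A ≤ ∑' n, ∑' j, ENNReal.ofReal (w n j) := by
  have hA' : A ⊆ ⋃ k, univ.pi (D (Nat.unpair k).1 (Nat.unpair k).2) := by
    refine hA.trans (iUnion₂_subset fun n j => ?_)
    simpa only [Nat.unpair_pair] using subset_iUnion (fun k =>
      univ.pi (D (Nat.unpair k).1 (Nat.unpair k).2)) (Nat.pair n j)
  calc outerVol μ A ≤ ∑' k, ENNReal.ofReal (w (Nat.unpair k).1 (Nat.unpair k).2) :=
        outerVol_le (fun k => hD _ _) hA'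
    _ = ∑' p : ℕ × ℕ, ENNReal.ofReal (w p.1 p.2) :=
        Nat.pairEquiv.symm.tsum_eq fun p => ENNReal.ofReal (w p.1 p.2)
    _ = ∑' n, ∑' j, ENNReal.ofReal (w n j) :=
        ENNReal.tsum_prod (f := fun n j => ENNReal.ofReal (w n j))

end Rectangles

theorem stmt_9 {Ω : ℕ → Type*} [∀ i, MeasurableSpace (Ω i)] (μ : ∀ i, Measure (Ω i))
    (m : ℕ) (C : ∀ i, Set (Ω i)) (hmeas : ∀ i, MeasurableSet (C i))
    (hcyl : ∀ i, m ≤ i → C i = Set.univ) (B : Set (∀ i, Ω i)) :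
    outerVol μ (B ∩ Set.univ.pi C) + outerVol μ (B ∩ (Set.univ.pi C)ᶜ) ≤ outerVol μ B := by
  refine le_iInf fun D => le_iInf fun w => le_iInf fun hD => le_iInf fun hB => ?_
  choose u u' hu hu' hsplit using fun n => (hD n).exists_split hmeas hcyl
  have hcovIn : B ∩ univ.pi C ⊆ ⋃ n, univ.pi fun i => D n i ∩ C i := by
    simp_rw [pi_inter_distrib, ← iUnion_inter]
    exact inter_subset_inter_left _ hB
  have hcovOut : B ∩ (univ.pi C)ᶜ ⊆ ⋃ n, ⋃ j, univ.pi fun i => D n i ∩ complPiece C j i := by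
    simp_rw [pi_inter_distrib, ← inter_iUnion, ← iUnion_inter]
    exact inter_subset_inter hB (compl_pi_subset_iUnion_pi_complPiece C)
  calc outerVol μ (B ∩ univ.pi C) + outerVol μ (B ∩ (univ.pi C)ᶜ)
      ≤ ∑' n, ENNReal.ofReal (u n) + ∑' n, ∑' j, ENNReal.ofReal (u' n j) :=
        add_le_add (outerVol_le hu hcovIn) (outerVol_le_tsum_tsum hu' hcovOut)
    _ = ∑' n, ENNReal.ofReal (w n) := by
        rw [← ENNReal.tsum_add]
        exact tsum_congr hsplit
end
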